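/- arXiv:2509.20849 — 7 statements merged into one kernel-verified Lean document; each statement's English description precedes it below -/
import Mathlib

section
/- For a continuous function f between metric spaces X and Y and fixed r > 0, the function lip_r f(x) := inf_{0<ρ<r} sup_{u∈B(x,ρ)} |f(u)−f(x)|/ρ is upper semicontinuous on X. -/
open Metric Filter ENNReal Topology

/-- For a continuous f and r > 0, lip_r f is upper semicontinuous. -/
theorem lip_r_upperSemicontinuous {X Y : Type*} [MetricSpace X] [MetricSpace Y]
    (f : X → Y) (hf : Continuous f) (r : ℝ) (hr : 0 < r) :
    UpperSemicontinuous (fun x : X => ⨅ ρ ∈ Set.Ioo (0:ℝ) r, ⨆ u ∈ ball x ρ,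
      edist (f u) (f x) / ENNReal.ofReal ρ) := by
  intro x b hb
  simp only [iInf_lt_iff] at hb
  obtain ⟨ρ, hρmem, hM⟩ := hb
  set M := ⨆ u ∈ ball x ρ, edist (f u) (f x) / ENNReal.ofReal ρ with hMdef
  have hρ0 : 0 < ρ := hρmem.1
  have hρr : ρ < r := hρmem.2
  have hMne : M ≠ ⊤ := (hM.trans_le le_top).ne
  obtain ⟨c, hMc, hcb⟩ := exists_between hM
  have hcne : c ≠ ⊤ := (hcb.trans_le le_top).ne
  set m := M.toReal with hmdef
  set cr := c.toReal with hcrdef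
  have hMo : M = ENNReal.ofReal m := (ENNReal.ofReal_toReal hMne).symm
  have hco : c = ENNReal.ofReal cr := (ENNReal.ofReal_toReal hcne).symm
  have hm0 : (0:ℝ) ≤ m := ENNReal.toReal_nonneg
  have hmc : m < cr := (ENNReal.toReal_lt_toReal hMne hcne).mpr hMc
  have hcr0 : (0:ℝ) < cr := lt_of_le_of_lt hm0 hmc
  set ρ' := ((m + cr) * ρ / (2 * cr) + ρ) / 2 with hρ'def
  have hca : cr * ((m + cr) * ρ / (2 * cr)) = (m + cr) * ρ / 2 := by
    field_simp
  have ha0 : 0 < (m + cr) * ρ / (2 * cr) :=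
    div_pos (mul_pos (by linarith) hρ0) (by linarith)
  have hρ'0 : 0 < ρ' := by
    have := ha0; simp only [hρ'def]; linarith
  have haρ : (m + cr) * ρ / (2 * cr) < ρ := by
    rw [div_lt_iff₀ (by linarith : (0:ℝ) < 2 * cr)]
    nlinarith
  have hρ'ρ : ρ' < ρ := by simp only [hρ'def]; linarith
  have h3 : m * ρ < cr * ρ' := by
    have h4 : cr * ρ' = (cr * ((m + cr) * ρ / (2 * cr)) + cr * ρ) / 2 := by
      simp only [hρ'def]; ring
    rw [h4, hca]
    nlinarith
  set εr := (cr * ρ' - m * ρ) / 2 with hεrdef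
  have hεr0 : 0 < εr := by simp only [hεrdef]; linarith
  have hkey : m * ρ + εr < cr * ρ' := by simp only [hεrdef]; linarith
  -- the eventual conditions
  have hcont : ∀ᶠ y in 𝓝 x, edist (f y) (f x) < ENNReal.ofReal εr := by
    have h := hf.continuousAt (x := x)
      (EMetric.ball_mem_nhds (f x) (ENNReal.ofReal_pos.mpr hεr0))
    filter_upwards [h] with y hy using hy
  filter_upwards [hcont, Metric.ball_mem_nhds x (by linarith : (0:ℝ) < ρ - ρ')]
    with y hy2 hy1
  have hyx : dist y x < ρ - ρ' := mem_ball.mp hy1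
  calc ⨅ ρ'' ∈ Set.Ioo (0:ℝ) r, ⨆ u ∈ ball y ρ'', edist (f u) (f y) / ENNReal.ofReal ρ''
      ≤ ⨆ u ∈ ball y ρ', edist (f u) (f y) / ENNReal.ofReal ρ' :=
        iInf₂_le ρ' ⟨hρ'0, hρ'ρ.trans hρr⟩
    _ ≤ ENNReal.ofReal (m * ρ + εr) / ENNReal.ofReal ρ' := by
        refine iSup₂_le fun u hu => ?_
        refine ENNReal.div_le_div_right ?_ _
        have hux : u ∈ ball x ρ := by
          rw [mem_ball] at *
          have := dist_triangle u y x
          linarith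
        have h1u : edist (f u) (f x) ≤ M * ENNReal.ofReal ρ := by
          have hdivle : edist (f u) (f x) / ENNReal.ofReal ρ ≤ M := by
            rw [hMdef]
            exact le_iSup₂ (f := fun (u : X) (_ : u ∈ ball x ρ) =>
              edist (f u) (f x) / ENNReal.ofReal ρ) u hux
          rwa [ENNReal.div_le_iff (by simpa using hρ0) ENNReal.ofReal_ne_top] at hdivle
        calc edist (f u) (f y) ≤ edist (f u) (f x) + edist (f x) (f y) := edist_triangle _ _ _
          _ ≤ M * ENNReal.ofReal ρ + ENNReal.ofReal εr := by
              refine add_le_add h1u ?_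
              rw [edist_comm]
              exact hy2.le
          _ = ENNReal.ofReal (m * ρ + εr) := by
              rw [hMo, ← ENNReal.ofReal_mul hm0,
                ← ENNReal.ofReal_add (by positivity) hεr0.le]
    _ < c := by
        refine ENNReal.div_lt_of_lt_mul ?_
        rw [hco, ← ENNReal.ofReal_mul hcr0.le]
        exact (ENNReal.ofReal_lt_ofReal_iff (by positivity)).mpr hkey
    _ < b := hcb
end

section
/- For a continuous function f between metric spaces X and Y, the little Lipschitz derivative lip f : X → [0,∞] is ℱ_σ-lower semicontinuous, i.e. for every real γ the set {x : lip f(x) > γ} is an F_σ subset of X. -/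
/-!
`lip f x > γ` holds iff for some margin `1/(m+1)` and some scale `1/(k+1)`, the oscillation of `f`
on `ball x ρ` is at least `(γ + 1/(m+1)) ρ` for every `ρ ≤ 1/(k+1)`. Each such set is closed: if `y`
is close to `x`, then `ball y ρ'` sits inside `ball x ρ` for `ρ' < ρ`, so by continuity of `f` the
oscillation at `x` on radius `ρ` dominates the one at `y` on radius `ρ'`, and one lets `ρ' → ρ`.
-/

open Metric Filter ENNReal Topology Set

theorem nhdsGT_zero_basis_Ioc_one_div :
    (𝓝[>] (0 : ℝ)).HasBasis (fun _ : ℕ => True) (fun k => Ioc 0 (1 / (k + 1 : ℝ))) :=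
  (nhdsGT_basis_Ioc (0 : ℝ)).to_hasBasis
    (fun _ hε => let ⟨k, hk⟩ := exists_nat_one_div_lt hε; ⟨k, trivial, Ioc_subset_Ioc_right hk.le⟩)
    (fun _ _ => ⟨_, Nat.one_div_pos_of_nat, subset_rfl⟩)

theorem ENNReal.exists_nat_add_inv_lt {c d : ℝ≥0∞} (h : c < d) :
    ∃ m : ℕ, c + ((m : ℝ≥0∞) + 1)⁻¹ < d := by
  obtain ⟨m, hm⟩ := ENNReal.exists_inv_nat_lt (tsub_pos_of_lt h).ne'
  have hinv : ((m : ℝ≥0∞) + 1)⁻¹ < d - c :=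
    lt_of_le_of_lt (ENNReal.inv_le_inv.2 le_self_add) hm
  exact ⟨m, lt_tsub_iff_left.1 hinv⟩

theorem ENNReal.lt_liminf_iff_exists_nat {α : Type*} {l : Filter α} {u : α → ℝ≥0∞} {c : ℝ≥0∞}
    (hc : c ≠ ∞) : c < liminf u l ↔ ∃ m : ℕ, ∀ᶠ a in l, c + ((m : ℝ≥0∞) + 1)⁻¹ ≤ u a := by
  constructor
  · intro h
    obtain ⟨d, hcd, hd⟩ := exists_between h
    obtain ⟨m, hm⟩ := exists_nat_add_inv_lt hcd
    exact ⟨m, (eventually_lt_of_lt_liminf hd).mono fun a ha => (hm.trans ha).le⟩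
  · rintro ⟨m, hm⟩
    calc c < c + ((m : ℝ≥0∞) + 1)⁻¹ := ENNReal.lt_add_right hc (by simp)
      _ ≤ liminf u l := le_liminf_of_le (by isBoundedDefault) hm

theorem ENNReal.lt_liminf_div_nhdsGT_zero_iff {g : ℝ → ℝ≥0∞} {c : ℝ≥0∞} (hc : c ≠ ∞) :
    c < liminf (fun ρ => g ρ / ENNReal.ofReal ρ) (𝓝[>] 0) ↔
      ∃ m k : ℕ, ∀ ρ ∈ Ioc 0 (1 / (k + 1 : ℝ)),
        (c + ((m : ℝ≥0∞) + 1)⁻¹) * ENNReal.ofReal ρ ≤ g ρ := by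
  simp only [lt_liminf_iff_exists_nat hc, nhdsGT_zero_basis_Ioc_one_div.eventually_iff, true_and]
  refine exists_congr fun m => exists_congr fun k => forall₂_congr fun ρ hρ => ?_
  exact ENNReal.le_div_iff_mul_le (Or.inl (ENNReal.ofReal_pos.2 hρ.1).ne') (Or.inl ofReal_ne_top)

section

variable {X Y : Type*} [PseudoMetricSpace X] [PseudoEMetricSpace Y]

noncomputable def ballOsc (f : X → Y) (x : X) (ρ : ℝ) : ℝ≥0∞ :=
  ⨆ u ∈ ball x ρ, edist (f u) (f x)

theorem ballOsc_le_of_dist_add_le (f : X → Y) {x y : X} {ρ ρ' : ℝ} (h : dist y x + ρ' ≤ ρ) :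
    ballOsc f y ρ' ≤ ballOsc f x ρ + edist (f y) (f x) := by
  refine iSup₂_le fun u hu => ?_
  have hux : u ∈ ball x ρ := by
    rw [mem_ball] at hu ⊢
    linarith [dist_triangle u y x]
  calc edist (f u) (f y) ≤ edist (f u) (f x) + edist (f y) (f x) := edist_triangle_right _ _ _
    _ ≤ ballOsc f x ρ + edist (f y) (f x) := by gcongr; exact le_iSup₂_of_le u hux le_rfl

theorem ballOsc_div (f : X → Y) (x : X) (ρ : ℝ) (a : ℝ≥0∞) :
    ballOsc f x ρ / a = ⨆ u ∈ ball x ρ, edist (f u) (f x) / a := by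
  simp only [ballOsc, ENNReal.iSup_div]

theorem isClosed_setOf_forall_mul_le_ballOsc {f : X → Y} (hf : Continuous f) {a : ℝ≥0∞}
    (ha : a ≠ ∞) (r : ℝ) :
    IsClosed {x | ∀ ρ ∈ Ioc 0 r, a * ENNReal.ofReal ρ ≤ ballOsc f x ρ} := by
  refine isClosed_of_closure_subset fun x hx ρ hρ => ?_
  have key : ∀ ρ' ∈ Ioo 0 ρ, a * ENNReal.ofReal ρ' ≤ ballOsc f x ρ := by
    intro ρ' hρ'
    refine ENNReal.le_of_forall_pos_le_add fun ε hε _ => ?_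
    have hnear : ∀ᶠ y in 𝓝 x, dist y x < ρ - ρ' ∧ edist (f y) (f x) < ε :=
      Filter.Eventually.and (ball_mem_nhds x (sub_pos.2 hρ'.2))
        (hf.continuousAt.preimage_mem_nhds (eball_mem_nhds (f x) (by simpa using hε)))
    obtain ⟨y, ⟨hyx, hfy⟩, hy⟩ := (hnear.and_frequently (mem_closure_iff_frequently.1 hx)).exists
    calc a * ENNReal.ofReal ρ' ≤ ballOsc f y ρ' := hy ρ' ⟨hρ'.1, hρ'.2.le.trans hρ.2⟩
      _ ≤ ballOsc f x ρ + edist (f y) (f x) := ballOsc_le_of_dist_add_le f (by linarith)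
      _ ≤ ballOsc f x ρ + ε := by gcongr
  have hcont : Tendsto (fun ρ' => a * ENNReal.ofReal ρ') (𝓝[<] ρ) (𝓝 (a * ENNReal.ofReal ρ)) :=
    ((ENNReal.continuous_const_mul ha).comp ENNReal.continuous_ofReal).continuousAt.tendsto
      |>.mono_left nhdsWithin_le_nhds
  exact le_of_tendsto hcont (mem_of_superset (Ioo_mem_nhdsLT hρ.1) key)

end

/-- For a continuous f, lip f is ℱ_σ-lower semicontinuous. -/
theorem lip_Fsigma_lowerSemicontinuous {X Y : Type*} [MetricSpace X] [MetricSpace Y]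
    (f : X → Y) (hf : Continuous f) :
    ∀ γ : ℝ, ∃ F : ℕ → Set X, (∀ n, IsClosed (F n)) ∧
      {x : X | ENNReal.ofReal γ <
        liminf (fun ρ : ℝ => ⨆ u ∈ ball x ρ, edist (f u) (f x) / ENNReal.ofReal ρ)
          (𝓝[>] (0:ℝ))} = ⋃ n, F n := by
  intro γ
  let E (m k : ℕ) : Set X := {x | ∀ ρ ∈ Ioc 0 (1 / (k + 1 : ℝ)),
    (ENNReal.ofReal γ + ((m : ℝ≥0∞) + 1)⁻¹) * ENNReal.ofReal ρ ≤ ballOsc f x ρ}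
  refine ⟨fun n => E n.unpair.1 n.unpair.2,
    fun n => isClosed_setOf_forall_mul_le_ballOsc hf (add_ne_top.2 ⟨ofReal_ne_top, by simp⟩) _, ?_⟩
  rw [iUnion_unpair]
  ext x
  simp only [mem_iUnion, ← ballOsc_div]
  exact lt_liminf_div_nhdsGT_zero_iff ofReal_ne_top
end

section
/- For a continuous function f between metric spaces X and Y and fixed r > 0, the function Lip_r f(x) := sup_{0<ρ<r} sup_{u∈B(x,ρ)} |f(u)−f(x)|/ρ is lower semicontinuous on X. -/
open Metric Filter ENNReal Topology

/-- For a continuous f and r > 0, Lip_r f is lower semicontinuous. -/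
theorem Lip_r_lowerSemicontinuous {X Y : Type*} [MetricSpace X] [MetricSpace Y]
    (f : X → Y) (hf : Continuous f) (r : ℝ) (hr : 0 < r) :
    LowerSemicontinuous (fun x : X => ⨆ ρ ∈ Set.Ioo (0:ℝ) r, ⨆ u ∈ ball x ρ,
      edist (f u) (f x) / ENNReal.ofReal ρ) := by
  intro x c hc
  simp only [lt_iSup_iff] at hc
  obtain ⟨ρ, hρ, u, hu, hlt⟩ := hc
  have hρ0 : ENNReal.ofReal ρ ≠ 0 := by
    simp [ENNReal.ofReal_pos.mpr hρ.1, ne_of_gt]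
  have hρtop : ENNReal.ofReal ρ ≠ ⊤ := ENNReal.ofReal_ne_top
  have hmul : c * ENNReal.ofReal ρ < edist (f u) (f x) :=
    (ENNReal.lt_div_iff_mul_lt (Or.inl hρ0) (Or.inl hρtop)).mp hlt
  have h1 : ∀ᶠ y in 𝓝 x, c * ENNReal.ofReal ρ < edist (f u) (f y) := by
    have : Tendsto (fun y => edist (f u) (f y)) (𝓝 x) (𝓝 (edist (f u) (f x))) :=
      (continuous_const.edist hf).continuousAt
    exact this.eventually_const_lt hmul
  have h2 : ∀ᶠ y in 𝓝 x, u ∈ ball y ρ := by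
    have hx : x ∈ ball u ρ := by
      rw [mem_ball, dist_comm]; exact mem_ball.mp hu
    filter_upwards [isOpen_ball.eventually_mem hx] with y hy
    rw [mem_ball, dist_comm]; exact mem_ball.mp hy
  filter_upwards [h1, h2] with y hy1 hy2
  calc c < edist (f u) (f y) / ENNReal.ofReal ρ :=
        (ENNReal.lt_div_iff_mul_lt (Or.inl hρ0) (Or.inl hρtop)).mpr hy1
    _ ≤ _ := le_iSup₂_of_le ρ hρ (le_iSup₂ (f := fun u (_ : u ∈ ball y ρ) => edist (f u) (f y) / ENNReal.ofReal ρ) u hy2)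
end

section
/- For a continuous function f between metric spaces X and Y, the big Lipschitz derivative Lip f : X → [0,∞] is ℱ_σ-upper semicontinuous, i.e. for every real γ the set {x : Lip f(x) < γ} is an F_σ subset of X. -/
open Metric Filter ENNReal Topology

/-!
`Lip f x < γ` holds iff for some rational `q < γ` and some `n`, every difference quotient at `x`
with base point in the ball of radius `1/n` is at most `q`. For fixed `q` and `n` this condition
is an intersection over `u` of closed conditions on `x` (here the continuity of `f` enters), and
there are countably many pairs `(q, n)`.
-/

def lipBoundSet {X Y : Type*} [PseudoEMetricSpace X] [PseudoEMetricSpace Y] (f : X → Y)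
    (c r : ℝ≥0∞) : Set X :=
  {x | ∀ u, edist u x < r → edist (f u) (f x) ≤ c * edist u x}

theorem isClosed_lipBoundSet {X Y : Type*} [PseudoEMetricSpace X] [PseudoEMetricSpace Y]
    {f : X → Y} (hf : Continuous f) {c : ℝ≥0∞} (hc : c ≠ ∞) (r : ℝ≥0∞) :
    IsClosed (lipBoundSet f c r) := by
  have hdist (u : X) : Continuous fun x => edist u x := continuous_const.edist continuous_id
  have hset : lipBoundSet f c r =
      ⋂ u, {x | r ≤ edist u x} ∪ {x | edist (f u) (f x) ≤ c * edist u x} := by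
    ext x
    simp [lipBoundSet, imp_iff_not_or]
  rw [hset]
  exact isClosed_iInter fun u => (isClosed_le continuous_const (hdist u)).union
    (isClosed_le (continuous_const.edist hf) ((ENNReal.continuous_const_mul hc).comp (hdist u)))

theorem eventually_div_edist_le_iff_exists_mem_lipBoundSet {X Y : Type*} [MetricSpace X]
    [PseudoEMetricSpace Y] {f : X → Y} {c : ℝ≥0∞} {x : X} :
    (∀ᶠ u in 𝓝[≠] x, edist (f u) (f x) / edist u x ≤ c) ↔
      ∃ n : ℕ, x ∈ lipBoundSet f c (n : ℝ≥0∞)⁻¹ := by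
  have hbasis := nhdsWithin_hasBasis
    (nhds_basis_uniformity uniformity_basis_edist_inv_nat (x := x)) {x}ᶜ
  simp only [hbasis.eventually_iff, true_and]
  refine exists_congr fun n => forall_congr' fun u => ?_
  rcases eq_or_ne u x with rfl | hux
  · simp
  · simp only [Set.mem_inter_iff, Set.mem_ofPred_eq, Set.mem_compl_singleton_iff,
      ENNReal.div_le_iff (edist_pos.2 hux).ne' (edist_ne_top u x), and_iff_left hux]

theorem ENNReal.limsup_lt_iff_exists_rat {α : Type*} {l : Filter α} {g : α → ℝ≥0∞}
    {a : ℝ≥0∞} :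
    limsup g l < a ↔ ∃ q : ℚ, ENNReal.ofReal q < a ∧ ∀ᶠ y in l, g y ≤ ENNReal.ofReal q := by
  constructor
  · intro h
    obtain ⟨q, -, hlq, hqa⟩ := ENNReal.lt_iff_exists_rat_btwn.1 h
    exact ⟨q, hqa, (eventually_lt_of_limsup_lt hlq).mono fun _ => le_of_lt⟩
  · rintro ⟨q, hqa, hq⟩
    exact (limsup_le_of_le (by isBoundedDefault) hq).trans_lt hqa

theorem setOf_limsup_lt_eq_iUnion_lipBoundSet {X Y : Type*} [MetricSpace X]
    [PseudoEMetricSpace Y] (f : X → Y) (a : ℝ≥0∞) :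
    {x | limsup (fun u => edist (f u) (f x) / edist u x) (𝓝[≠] x) < a} =
      ⋃ p : {q : ℚ // ENNReal.ofReal q < a} × ℕ,
        lipBoundSet f (ENNReal.ofReal p.1) (p.2 : ℝ≥0∞)⁻¹ := by
  ext x
  simp only [Set.mem_ofPred_eq, Set.mem_iUnion, ENNReal.limsup_lt_iff_exists_rat,
    eventually_div_edist_le_iff_exists_mem_lipBoundSet, Prod.exists, Subtype.exists,
    exists_prop]

theorem exists_nat_isClosed_iUnion_eq {X ι : Type*} [TopologicalSpace X] [Countable ι]
    {F : ι → Set X} (hF : ∀ i, IsClosed (F i)) :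
    ∃ G : ℕ → Set X, (∀ n, IsClosed (G n)) ∧ ⋃ i, F i = ⋃ n, G n := by
  cases isEmpty_or_nonempty ι
  · exact ⟨fun _ => ∅, fun _ => isClosed_empty, by simp⟩
  · obtain ⟨e, he⟩ := exists_surjective_nat ι
    exact ⟨F ∘ e, fun n => hF (e n), (he.iUnion_comp F).symm⟩

/-- For a continuous f, Lip f is ℱ_σ-upper semicontinuous. -/
theorem Lip_Fsigma_upperSemicontinuous {X Y : Type*} [MetricSpace X] [MetricSpace Y]
    (f : X → Y) (hf : Continuous f) :
    ∀ γ : ℝ, ∃ F : ℕ → Set X, (∀ n, IsClosed (F n)) ∧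
      {x : X | limsup (fun u => edist (f u) (f x) / edist u x) (𝓝[≠] x) <
        ENNReal.ofReal γ} = ⋃ n, F n := by
  intro γ
  rw [setOf_limsup_lt_eq_iUnion_lipBoundSet]
  exact exists_nat_isClosed_iUnion_eq fun _ => isClosed_lipBoundSet hf ofReal_ne_top _
end

section
/- For a continuous function f between metric spaces, the set ℓ(f) = {x : lip f(x) < ∞} is a G_{δσ}-set and the set L(f) = {x : Lip f(x) < ∞} is an F_σ-set. -/
open Metric Filter ENNReal Topology Set

private lemma isOpen_U {X Y : Type*} [MetricSpace X] [MetricSpace Y]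
    (f : X → Y) (hf : Continuous f) (n m : ℕ) :
    IsOpen {x : X | ∃ ρ : ℝ, 0 < ρ ∧ ρ < 1/(m+1) ∧
      (⨆ u ∈ ball x ρ, edist (f u) (f x)) < n * ENNReal.ofReal ρ} := by
  rw [Metric.isOpen_iff]
  rintro x ⟨ρ, hρ0, hρm, hS⟩
  set S := ⨆ u ∈ ball x ρ, edist (f u) (f x) with hSdef
  have hnt : (n : ℝ≥0∞) * ENNReal.ofReal ρ ≠ ⊤ :=
    ENNReal.mul_ne_top (ENNReal.natCast_ne_top n) ENNReal.ofReal_ne_top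
  obtain ⟨c, hc1, hc2⟩ := exists_between hS
  set r : ℝ≥0∞ := n * ENNReal.ofReal ρ - c with hrdef
  have hrt : r ≠ ⊤ := (tsub_le_self.trans_lt (lt_top_iff_ne_top.mpr hnt)).ne
  have hr0 : r ≠ 0 := (tsub_pos_of_lt hc2).ne'
  set ε : ℝ := r.toReal with hεdef
  have hε0 : 0 < ε := ENNReal.toReal_pos hr0 hrt
  have hεr : ENNReal.ofReal ε = r := ENNReal.ofReal_toReal hrt
  have key : S + ENNReal.ofReal ε < (n : ℝ≥0∞) * ENNReal.ofReal ρ := by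
    calc S + ENNReal.ofReal ε < c + r := by
          rw [hεr]; exact (ENNReal.add_lt_add_iff_right hrt).mpr hc1
      _ = (n : ℝ≥0∞) * ENNReal.ofReal ρ := add_tsub_cancel_of_le hc2.le
  obtain ⟨δ₁, hδ₁0, hδ₁⟩ := (Metric.continuous_iff.mp hf) x (ε/2) (by positivity)
  set δ : ℝ := min δ₁ (min (ρ/2) (ε/(2*(n+1)))) with hδdef
  have hδ0 : 0 < δ := by
    apply lt_min hδ₁0; apply lt_min <;> positivity
  have hδρ : δ ≤ ρ/2 := (min_le_right _ _).trans (min_le_left _ _)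
  have hδε : δ ≤ ε/(2*(n+1)) := (min_le_right _ _).trans (min_le_right _ _)
  refine ⟨δ, hδ0, fun y hy => ?_⟩
  rw [mem_ball] at hy
  refine ⟨ρ - δ, by linarith, by linarith, ?_⟩
  have hfx : edist (f x) (f y) ≤ ENNReal.ofReal (ε/2) := by
    rw [edist_comm]
    exact (edist_lt_ofReal.mpr (hδ₁ y (hy.trans_le (min_le_left _ _)))).le
  have hS' : (⨆ u ∈ ball y (ρ - δ), edist (f u) (f y)) ≤ S + ENNReal.ofReal (ε/2) := by
    refine iSup₂_le fun u hu => ?_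
    rw [mem_ball] at hu
    have hux : u ∈ ball x ρ := by
      rw [mem_ball]
      have := dist_triangle u y x
      linarith
    calc edist (f u) (f y) ≤ edist (f u) (f x) + edist (f x) (f y) := edist_triangle _ _ _
      _ ≤ S + ENNReal.ofReal (ε/2) :=
        add_le_add (le_biSup (fun u => edist (f u) (f x)) hux) hfx
  have hnd : (n : ℝ≥0∞) * ENNReal.ofReal δ ≤ ENNReal.ofReal (ε/2) := by
    rw [← ENNReal.ofReal_natCast n, ← ENNReal.ofReal_mul (Nat.cast_nonneg n)]
    apply ENNReal.ofReal_le_ofReal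
    have h1 : (n : ℝ) * δ ≤ (n : ℝ) * (ε/(2*(n+1))) :=
      mul_le_mul_of_nonneg_left hδε (Nat.cast_nonneg n)
    have h2 : (n : ℝ) * (ε/(2*(n+1))) ≤ ε/2 := by
      rw [mul_div_assoc']
      rw [div_le_div_iff₀ (by positivity) (by norm_num)]
      nlinarith [hε0.le, Nat.cast_nonneg (α := ℝ) n]
    linarith
  have hsplit : (n : ℝ≥0∞) * ENNReal.ofReal ρ
      = (n : ℝ≥0∞) * ENNReal.ofReal (ρ - δ) + (n : ℝ≥0∞) * ENNReal.ofReal δ := by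
    rw [← mul_add, ← ENNReal.ofReal_add (by linarith) hδ0.le, sub_add_cancel]
  have hεsum : ENNReal.ofReal (ε/2) + ENNReal.ofReal (ε/2) = ENNReal.ofReal ε := by
    rw [← ENNReal.ofReal_add (by positivity) (by positivity)]
    norm_num
  have hmain : (⨆ u ∈ ball y (ρ - δ), edist (f u) (f y)) + (n : ℝ≥0∞) * ENNReal.ofReal δ
      < (n : ℝ≥0∞) * ENNReal.ofReal (ρ - δ) + (n : ℝ≥0∞) * ENNReal.ofReal δ := by
    calc (⨆ u ∈ ball y (ρ - δ), edist (f u) (f y)) + (n : ℝ≥0∞) * ENNReal.ofReal δ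
        ≤ S + ENNReal.ofReal (ε/2) + ENNReal.ofReal (ε/2) := add_le_add hS' hnd
      _ = S + ENNReal.ofReal ε := by rw [add_assoc, hεsum]
      _ < (n : ℝ≥0∞) * ENNReal.ofReal ρ := key
      _ = _ := hsplit
  exact (ENNReal.add_lt_add_iff_right
    (ENNReal.mul_ne_top (ENNReal.natCast_ne_top n) ENNReal.ofReal_ne_top)).mp hmain

/-- For a continuous f, ℓ(f) is a G_{δσ}-set and L(f) is an F_σ-set. -/
theorem ell_Gds_and_L_Fs {X Y : Type*} [MetricSpace X] [MetricSpace Y]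
    (f : X → Y) (hf : Continuous f) :
    (∃ G : ℕ → Set X, (∀ n, IsGδ (G n)) ∧
      {x : X | liminf (fun ρ : ℝ => ⨆ u ∈ ball x ρ, edist (f u) (f x) / ENNReal.ofReal ρ)
        (𝓝[>] (0:ℝ)) < ⊤} = ⋃ n, G n) ∧
    (∃ F : ℕ → Set X, (∀ n, IsClosed (F n)) ∧
      {x : X | limsup (fun u => edist (f u) (f x) / edist u x) (𝓝[≠] x) < ⊤} = ⋃ n, F n) := by
  constructor
  · -- G_δσ part
    refine ⟨fun n => ⋂ m : ℕ, {x : X | ∃ ρ : ℝ, 0 < ρ ∧ ρ < 1/(m+1) ∧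
        (⨆ u ∈ ball x ρ, edist (f u) (f x)) < n * ENNReal.ofReal ρ},
      fun n => IsGδ.iInter fun m => (isOpen_U f hf n m).isGδ, ?_⟩
    ext x
    have hfun : (fun ρ : ℝ => ⨆ u ∈ ball x ρ, edist (f u) (f x) / ENNReal.ofReal ρ)
        = fun ρ : ℝ => (⨆ u ∈ ball x ρ, edist (f u) (f x)) / ENNReal.ofReal ρ := by
      funext ρ
      simp only [← ENNReal.iSup_div]
    simp only [mem_setOf_eq, mem_iUnion, mem_iInter, hfun]
    constructor
    · intro h
      obtain ⟨n, hn⟩ := ENNReal.exists_nat_gt h.ne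
      refine ⟨n, fun m => ?_⟩
      have hfr := frequently_lt_of_liminf_lt (by isBoundedDefault) hn
      have hIoo : Set.Ioo (0:ℝ) (1/(m+1)) ∈ 𝓝[>] (0:ℝ) :=
        Ioo_mem_nhdsGT_of_mem ⟨le_rfl, by positivity⟩
      obtain ⟨ρ, hρlt, hρIoo⟩ :=
        (hfr.and_eventually (eventually_of_mem hIoo fun ρ hρ => hρ)).exists
      refine ⟨ρ, hρIoo.1, hρIoo.2, ?_⟩
      exact (ENNReal.div_lt_iff (Or.inl (ENNReal.ofReal_pos.mpr hρIoo.1).ne')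
        (Or.inl ENNReal.ofReal_ne_top)).mp hρlt
    · rintro ⟨n, hn⟩
      refine lt_of_le_of_lt (liminf_le_of_frequently_le ?_) (ENNReal.natCast_lt_top n)
      rw [(nhdsGT_basis (0:ℝ)).frequently_iff]
      intro εb hεb
      obtain ⟨m, hm⟩ := exists_nat_one_div_lt hεb
      obtain ⟨ρ, h1, h2, h3⟩ := hn m
      refine ⟨ρ, ⟨h1, h2.trans hm⟩, ?_⟩
      exact ((ENNReal.div_lt_iff (Or.inl (ENNReal.ofReal_pos.mpr h1).ne')
        (Or.inl ENNReal.ofReal_ne_top)).mpr h3).le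
  · -- F_σ part
    refine ⟨fun n => {x : X | ∀ u : X, dist u x < 1/(n+1)
        → edist (f u) (f x) ≤ n * edist u x}, fun n => ?_, ?_⟩
    · show IsClosed {x : X | ∀ u : X, dist u x < 1/(n+1) → edist (f u) (f x) ≤ n * edist u x}
      have : {x : X | ∀ u : X, dist u x < 1/(n+1) → edist (f u) (f x) ≤ n * edist u x}
          = ⋂ u : X, ({x : X | 1/(n+1) ≤ dist u x}
            ∪ {x : X | edist (f u) (f x) ≤ n * edist u x}) := by
        ext x
        simp only [mem_setOf_eq, mem_iInter, mem_union]
        constructor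
        · intro h u
          rcases le_or_gt ((1:ℝ)/(n+1)) (dist u x) with h'|h'
          · exact Or.inl h'
          · exact Or.inr (h u h')
        · intro h u hu
          rcases h u with h'|h'
          · exact absurd hu (not_lt.mpr h')
          · exact h'
      rw [this]
      exact isClosed_iInter fun u => (isClosed_le continuous_const
          (Continuous.dist continuous_const continuous_id)).union
        (isClosed_le (Continuous.edist continuous_const hf)
          ((ENNReal.continuous_const_mul (ENNReal.natCast_ne_top n)).comp (Continuous.edist continuous_const continuous_id)))
    · ext x
      simp only [mem_setOf_eq, mem_iUnion]
      constructor
      · intro h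
        obtain ⟨n, hn⟩ := ENNReal.exists_nat_gt h.ne
        have hev := eventually_lt_of_limsup_lt hn
        rw [eventually_nhdsWithin_iff] at hev
        obtain ⟨δ, hδ0, hδ⟩ := Metric.eventually_nhds_iff.mp hev
        obtain ⟨m, hm⟩ := exists_nat_one_div_lt hδ0
        refine ⟨max n m, fun u hu => ?_⟩
        rcases eq_or_ne u x with rfl|hux
        · simp
        · have hsmall : dist u x < δ := by
            refine lt_of_lt_of_le (lt_of_lt_of_le hu ?_) hm.le
            apply one_div_le_one_div_of_le (by positivity)
            have : (m : ℝ) ≤ (max n m : ℕ) := Nat.cast_le.mpr (le_max_right n m)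
            linarith
          have := (ENNReal.div_lt_iff (Or.inl (edist_pos.mpr hux).ne')
            (Or.inl (edist_ne_top u x))).mp (hδ hsmall hux)
          refine this.le.trans (mul_le_mul_left ?_ _)
          exact_mod_cast Nat.cast_le.mpr (le_max_left n m)
      · rintro ⟨n, hn⟩
        refine lt_of_le_of_lt (limsup_le_of_le (by isBoundedDefault) ?_)
          (ENNReal.natCast_lt_top n)
        have hball : ball x (1/(n+1)) ∈ 𝓝 x := Metric.ball_mem_nhds x (by positivity)
        filter_upwards [nhdsWithin_le_nhds hball, self_mem_nhdsWithin] with u hu hu'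
        exact (ENNReal.div_le_iff (edist_pos.mpr hu').ne' (edist_ne_top u x)).mpr
          (hn u (mem_ball.mp hu))
end

section
/- Let D be a convex subset of a normed space X, Y a metric space, f : D → Y, and γ ≥ 0. Then f is γ-Lipschitz on D if and only if lip f(x) ≤ γ for every x ∈ D. -/
/-!
Finite `lip` makes `f` continuous on `D`, and `lip f(x) ≤ γ` says that for every `B > γ` there are
arbitrarily small radii `r` with `d(f w, f x) ≤ B r` on all of `D ∩ ball x r`. Along a segment
`t ↦ v + t • (u - v)` in the convex set `D` this bounds the lower right Dini derivative of
`t ↦ d(f (v + t • (u - v)), f v)` by `γ ‖u - v‖`, and the mean value inequality for continuous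
functions with a Dini derivative bound integrates it to `d(f u, f v) ≤ γ ‖u - v‖`.
-/

open Metric Filter ENNReal Topology

/-- The paper's `lip f(x)` for `f` restricted to `D`. -/
noncomputable def lipAt {X Y : Type*} [PseudoMetricSpace X] [PseudoEMetricSpace Y]
    (D : Set X) (f : X → Y) (x : X) : ℝ≥0∞ :=
  liminf (fun r : ℝ => ⨆ u ∈ D ∩ ball x r, edist (f u) (f x) / ENNReal.ofReal r) (𝓝[>] 0)

section lipAt

variable {X Y : Type*} [PseudoMetricSpace X] [PseudoMetricSpace Y] {D : Set X} {f : X → Y}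
  {x : X}

theorem lipAt_le_of_dist_le {γ : ℝ} (hγ : 0 ≤ γ)
    (hf : ∀ u ∈ D, dist (f u) (f x) ≤ γ * dist u x) : lipAt D f x ≤ ENNReal.ofReal γ := by
  refine liminf_le_of_frequently_le' (Eventually.frequently ?_)
  filter_upwards [self_mem_nhdsWithin] with r (hr : 0 < r)
  refine iSup₂_le fun u hu => ENNReal.div_le_of_le_mul ?_
  rw [edist_dist, ← ENNReal.ofReal_mul hγ]
  exact ENNReal.ofReal_le_ofReal <|
    (hf u hu.1).trans (mul_le_mul_of_nonneg_left (mem_ball.mp hu.2).le hγ)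

theorem frequently_forall_dist_le_of_lipAt_lt {B : ℝ} (hB : lipAt D f x < ENNReal.ofReal B) :
    ∃ᶠ r in 𝓝[>] (0 : ℝ), ∀ u ∈ D, dist u x < r → dist (f u) (f x) ≤ B * r := by
  have hB0 : 0 < B := ENNReal.ofReal_pos.mp (pos_of_gt hB)
  refine ((frequently_lt_of_liminf_lt (h := hB)).and_eventually self_mem_nhdsWithin).mono ?_
  rintro r ⟨hsup, hr : 0 < r⟩ u huD hux
  have hu : edist (f u) (f x) / ENNReal.ofReal r < ENNReal.ofReal B :=
    (le_biSup (fun u => edist (f u) (f x) / ENNReal.ofReal r)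
      (show u ∈ D ∩ ball x r from ⟨huD, mem_ball.mpr hux⟩)).trans_lt hsup
  rw [ENNReal.div_lt_iff (Or.inl (ENNReal.ofReal_pos.mpr hr).ne') (Or.inl ENNReal.ofReal_ne_top),
    edist_dist, ← ENNReal.ofReal_mul hB0.le] at hu
  exact ((ENNReal.ofReal_lt_ofReal_iff_of_nonneg dist_nonneg).mp hu).le

theorem continuousWithinAt_of_lipAt_ne_top (hx : lipAt D f x ≠ ⊤) :
    ContinuousWithinAt f D x := by
  obtain ⟨B, hB⟩ : ∃ B : ℝ, lipAt D f x < ENNReal.ofReal B :=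
    ⟨(lipAt D f x).toReal + 1, by
      rw [ENNReal.ofReal_add ENNReal.toReal_nonneg zero_le_one, ENNReal.ofReal_toReal hx]
      exact ENNReal.lt_add_right hx (by simp)⟩
  have hB0 : 0 < B := ENNReal.ofReal_pos.mp (pos_of_gt hB)
  refine Metric.continuousWithinAt_iff.mpr fun ε hε => ?_
  obtain ⟨r, hbound, hr0, hrε⟩ := ((frequently_forall_dist_le_of_lipAt_lt hB).and_eventually
    (Ioo_mem_nhdsGT (div_pos hε hB0))).exists
  exact ⟨r, hr0, fun u huD hux => (hbound u huD hux).trans_lt ((lt_div_iff₀' hB0).mp hrε)⟩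

end lipAt

theorem dist_le_mul_of_frequently_dist_le {Y : Type*} [PseudoMetricSpace Y] {φ : ℝ → Y}
    {a b K : ℝ} (hφ : ContinuousOn φ (Set.Icc a b))
    (h : ∀ t ∈ Set.Ico a b, ∀ C, K < C → ∃ᶠ s in 𝓝[>] t, dist (φ s) (φ t) ≤ C * (s - t)) :
    ∀ ⦃t⦄, t ∈ Set.Icc a b → dist (φ t) (φ a) ≤ K * (t - a) := by
  refine image_le_of_liminf_slope_right_le_deriv_boundary (B' := fun _ => K)
    (by fun_prop) (by simp) (by fun_prop) (fun t _ => ?_) fun t ht r hr => ?_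
  · simpa using ((hasDerivWithinAt_id t _).sub_const a).const_mul K
  · refine ((h t ht ((K + r) / 2) (by linarith)).and_eventually self_mem_nhdsWithin).mono ?_
    rintro s ⟨hs, hts : t < s⟩
    rw [slope_def_field, div_lt_iff₀ (sub_pos.mpr hts)]
    calc dist (φ s) (φ a) - dist (φ t) (φ a) ≤ dist (φ s) (φ t) := by
          linarith [dist_triangle (φ s) (φ t) (φ a)]
      _ ≤ (K + r) / 2 * (s - t) := hs
      _ < r * (s - t) := mul_lt_mul_of_pos_right (by linarith) (sub_pos.mpr hts)

section NormedSpace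

variable {X Y : Type*} [NormedAddCommGroup X] [NormedSpace ℝ X] [PseudoMetricSpace Y]
  {D : Set X} {f : X → Y} {γ : ℝ}

theorem frequently_dist_add_smul_le_of_lipAt_le {x y : X} {C : ℝ} (hγ : 0 ≤ γ)
    (hx : lipAt D f x ≤ ENNReal.ofReal γ) (hD : ∀ᶠ h in 𝓝[>] (0 : ℝ), x + h • y ∈ D)
    (hC : γ * ‖y‖ < C) :
    ∃ᶠ h in 𝓝[>] (0 : ℝ), dist (f (x + h • y)) (f x) ≤ C * h := by
  have hC0 : 0 < C := (mul_nonneg hγ (norm_nonneg y)).trans_lt hC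
  -- `γ < B < C / ‖y‖`, so the step `h = (B / C) r` stays in `ball x r`,
  -- where the bound is `B r = C h`.
  set B := γ + (C - γ * ‖y‖) / (‖y‖ + 1)
  have hγB : γ < B := lt_add_of_pos_right γ (by positivity [sub_pos.mpr hC])
  have hBC : B * ‖y‖ < C := by
    have : (C - γ * ‖y‖) / (‖y‖ + 1) * ‖y‖ < C - γ * ‖y‖ := by
      rw [div_mul_eq_mul_div, div_lt_iff₀ (by positivity)]
      nlinarith [norm_nonneg y]
    linarith
  have hB0 : 0 < B := hγ.trans_lt hγB
  have hscale : Tendsto (fun r => B / C * r) (𝓝[>] 0) (𝓝[>] 0) :=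
    tendsto_nhdsWithin_of_tendsto_nhds_of_eventually_within _
      (((continuous_const_mul (B / C)).tendsto' 0 0 (mul_zero _)).mono_left nhdsWithin_le_nhds)
      (eventually_nhdsWithin_of_forall fun r (hr : 0 < r) => show 0 < B / C * r by positivity)
  refine hscale.frequently (((frequently_forall_dist_le_of_lipAt_lt
    (hx.trans_lt ((ENNReal.ofReal_lt_ofReal_iff hB0).mpr hγB))).and_eventually
    ((hscale.eventually hD).and self_mem_nhdsWithin)).mono ?_)
  rintro r ⟨hbound, hmem, hr : 0 < r⟩
  have hdist : dist (x + (B / C * r) • y) x < r := by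
    rw [dist_self_add_left, norm_smul, Real.norm_of_nonneg (by positivity)]
    calc B / C * r * ‖y‖ = B * ‖y‖ / C * r := by ring
      _ < r := mul_lt_of_lt_one_left hr ((div_lt_one hC0).mpr hBC)
  calc dist (f (x + (B / C * r) • y)) (f x) ≤ B * r := hbound _ hmem hdist
    _ = C * (B / C * r) := by field_simp

theorem Convex.dist_le_of_lipAt_le (hD : Convex ℝ D) (hγ : 0 ≤ γ)
    (hf : ∀ x ∈ D, lipAt D f x ≤ ENNReal.ofReal γ) {u v : X} (hu : u ∈ D) (hv : v ∈ D) :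
    dist (f u) (f v) ≤ γ * dist u v := by
  set φ := fun t : ℝ => f (v + t • (u - v))
  have hseg : Set.MapsTo (fun t : ℝ => v + t • (u - v)) (Set.Icc 0 1) D :=
    fun t ht => hD.add_smul_sub_mem hv hu ht
  have hcont : ContinuousOn φ (Set.Icc 0 1) := fun t ht =>
    (continuousWithinAt_of_lipAt_ne_top ((hf _ (hseg ht)).trans_lt ofReal_lt_top).ne).comp
      (f := fun t : ℝ => v + t • (u - v)) (by fun_prop) hseg
  have hdini : ∀ t ∈ Set.Ico (0 : ℝ) 1, ∀ C, γ * ‖u - v‖ < C →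
      ∃ᶠ s in 𝓝[>] t, dist (φ s) (φ t) ≤ C * (s - t) := by
    intro t ht C hC
    have hnear : ∀ᶠ h in 𝓝[>] (0 : ℝ), v + t • (u - v) + h • (u - v) ∈ D := by
      filter_upwards [Ioo_mem_nhdsGT (sub_pos.mpr ht.2)] with h hh
      simpa [add_smul, add_assoc] using
        hseg (show t + h ∈ Set.Icc 0 1 from ⟨by linarith [ht.1, hh.1], by linarith [hh.2]⟩)
    have hshift : Tendsto (fun h => t + h) (𝓝[>] 0) (𝓝[>] t) :=
      tendsto_nhdsWithin_of_tendsto_nhds_of_eventually_within _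
        (((continuous_const_add t).tendsto' 0 t (add_zero t)).mono_left nhdsWithin_le_nhds)
        (eventually_nhdsWithin_of_forall fun h (hh : 0 < h) => show t < t + h by linarith)
    refine hshift.frequently ((frequently_dist_add_smul_le_of_lipAt_le hγ
      (hf _ (hseg (Set.Ico_subset_Icc_self ht))) hnear hC).mono fun h hh => ?_)
    simpa [φ, add_smul, add_assoc] using hh
  simpa [φ, dist_eq_norm] using
    dist_le_mul_of_frequently_dist_le hcont hdini (Set.right_mem_Icc.2 zero_le_one)

end NormedSpace

/-- On a convex subset of a normed space, f is γ-Lipschitz iff lip f ≤ γ everywhere. -/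
theorem lipschitz_iff_lip_le {X Y : Type*} [NormedAddCommGroup X] [NormedSpace ℝ X]
    [MetricSpace Y] (D : Set X) (hD : Convex ℝ D) (f : X → Y) (γ : ℝ) (hγ : 0 ≤ γ) :
    (∀ u ∈ D, ∀ v ∈ D, dist (f u) (f v) ≤ γ * dist u v) ↔
    (∀ x ∈ D, liminf (fun r : ℝ => ⨆ u ∈ D ∩ ball x r,
      edist (f u) (f x) / ENNReal.ofReal r) (𝓝[>] (0:ℝ)) ≤ ENNReal.ofReal γ) :=
  ⟨fun hf x hx => lipAt_le_of_dist_le hγ fun u hu => hf u hu x hx,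
    fun hf _ hu _ hv => hD.dist_le_of_lipAt_le hγ hf hu hv⟩
end

section
/- Let D be a locally convex subset of a normed space X and f : D → ℝ a function. Then the upper Baire functions of lip f and of Lip f both equal 𝕃ip f: (lip f)^∨ = (Lip f)^∨ = 𝕃ip f on D. -/
open Metric Filter ENNReal Topology

/-!
The inequalities `lip f ≤ Lip f` (pointwise) and `(Lip f)^∨ ≤ 𝕃ip f` are soft. For the
converse `𝕃ip f ≤ (lip f)^∨`, fix `c` above `(lip f)^∨ x`; on a small convex neighbourhood `V`
of `x` every point has arbitrarily small radii `ρ` at which `f` oscillates by at most `c ρ`.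
Along a segment `γ` in `V` this makes `f ∘ γ` continuous and bounds the lower right Dini
derivative of `t ↦ |f (γ t) - f (γ 0)|` by `c ‖γ'‖`, so by the fencing theorem for Dini
derivatives `f` is `c`-Lipschitz on `V`.
-/

open Set NNReal AffineMap

section Oscillation

variable {X Y : Type*} [PseudoMetricSpace X] [PseudoMetricSpace Y]

/-- The finite-radius form of `lip g ≤ k` on `V`. -/
def HasLowerLipBoundOn (g : X → Y) (V : Set X) (k : ℝ≥0) : Prop :=
  ∀ x ∈ V, ∀ δ > 0, ∃ ρ ∈ Ioo 0 δ, ∀ y ∈ V, dist y x < ρ → dist (g y) (g x) ≤ k * ρ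

namespace HasLowerLipBoundOn

variable {g : X → Y} {V : Set X} {k : ℝ≥0}

theorem continuousOn (h : HasLowerLipBoundOn g V k) : ContinuousOn g V := by
  refine fun x hx => Metric.continuousWithinAt_iff.2 fun ε hε => ?_
  obtain ⟨ρ, ⟨hρ0, hρε⟩, hρ⟩ := h x hx (ε / (k + 1)) (by positivity)
  refine ⟨ρ, hρ0, fun y hy hyx => (hρ y hy hyx).trans_lt ?_⟩
  calc (k : ℝ) * ρ < (k + 1) * ρ := by linarith
    _ < (k + 1) * (ε / (k + 1)) := by gcongr
    _ = ε := mul_div_cancel₀ _ (by positivity)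

theorem comp {Z : Type*} [PseudoMetricSpace Z] (h : HasLowerLipBoundOn g V k) {γ : Z → X}
    {W : Set Z} {d : ℝ≥0} (hγ : LipschitzOnWith d γ W) (hd : 0 < d) (hWV : MapsTo γ W V) :
    HasLowerLipBoundOn (g ∘ γ) W (k * d) := by
  intro t ht δ hδ
  have hd' : (0 : ℝ) < d := hd
  obtain ⟨ρ, ⟨hρ0, hρδ⟩, hρ⟩ := h (γ t) (hWV ht) (d * δ) (by positivity)
  refine ⟨ρ / d, ⟨by positivity, (div_lt_iff₀' hd').2 hρδ⟩, fun s hs hst => ?_⟩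
  have hγst : dist (γ s) (γ t) < ρ :=
    calc dist (γ s) (γ t) ≤ d * dist s t := hγ.dist_le_mul s hs t ht
      _ < d * (ρ / d) := by gcongr
      _ = ρ := mul_div_cancel₀ _ hd'.ne'
  calc dist (g (γ s)) (g (γ t)) ≤ k * ρ := hρ _ (hWV hs) hγst
    _ = (k * d : ℝ≥0) * (ρ / d) := by push_cast; field_simp

theorem frequently_slope_lt {g : ℝ → Y} {a b : ℝ} (h : HasLowerLipBoundOn g (Icc a b) k)
    {x : ℝ} (hx : x ∈ Ico a b) {r : ℝ} (hr : k < r) :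
    ∃ᶠ z in 𝓝[>] x, slope (fun t => dist (g t) (g a)) x z < r := by
  have hr0 : 0 < r := k.coe_nonneg.trans_lt hr
  -- `z = x + θ ρ` with `θ < 1` stays in the `ρ`-ball, and `k / θ < r` bounds the slope up to `z`.
  obtain ⟨θ, hkθ, hθ1⟩ : ∃ θ, k / r < θ ∧ θ < 1 := exists_between ((div_lt_one hr0).2 hr)
  have hθ0 : 0 < θ := (div_nonneg k.coe_nonneg hr0.le).trans_lt hkθ
  refine (nhdsGT_basis x).frequently_iff.2 fun i hxi => ?_
  obtain ⟨ρ, ⟨hρ0, hρi⟩, hρ⟩ := h x (Ico_subset_Icc_self hx) (min (i - x) (b - x))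
    (lt_min (by linarith) (by linarith [hx.2]))
  have hρθ : θ * ρ < ρ := by nlinarith
  refine ⟨x + θ * ρ, ⟨by nlinarith, by linarith [min_le_left (i - x) (b - x)]⟩, ?_⟩
  have hmem : x + θ * ρ ∈ Icc a b :=
    ⟨by nlinarith [hx.1], by linarith [min_le_right (i - x) (b - x)]⟩
  have hosc : dist (g (x + θ * ρ)) (g x) ≤ k * ρ :=
    hρ _ hmem (by rw [Real.dist_eq, add_sub_cancel_left, abs_of_pos (by positivity)]; exact hρθ)
  rw [slope_def_field, add_sub_cancel_left, div_lt_iff₀ (by positivity)]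
  calc dist (g (x + θ * ρ)) (g a) - dist (g x) (g a) ≤ dist (g (x + θ * ρ)) (g x) := by
        linarith [dist_triangle (g (x + θ * ρ)) (g x) (g a)]
    _ ≤ k * ρ := hosc
    _ < r * (θ * ρ) := by rw [div_lt_iff₀ hr0] at hkθ; nlinarith

theorem dist_le_of_mem_Icc {g : ℝ → Y} {a b : ℝ} (h : HasLowerLipBoundOn g (Icc a b) k)
    {t : ℝ} (ht : t ∈ Icc a b) : dist (g t) (g a) ≤ k * (t - a) :=
  image_le_of_liminf_slope_right_le_deriv_boundary
    (continuous_dist.comp_continuousOn (h.continuousOn.prodMk continuousOn_const)) (by simp)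
    (by fun_prop)
    (fun x _ => (((hasDerivAt_id x).sub_const a).const_mul (k : ℝ)).hasDerivWithinAt.congr_deriv
      (by simp))
    (fun _ hx _ hr => h.frequently_slope_lt hx hr) ht

theorem lipschitzOnWith {E : Type*} [NormedAddCommGroup E] [NormedSpace ℝ E] {g : E → Y}
    {V : Set E} (hV : Convex ℝ V) (h : HasLowerLipBoundOn g V k) : LipschitzOnWith k g V := by
  refine LipschitzOnWith.of_dist_le_mul fun u hu v hv => ?_
  rcases eq_or_ne v u with rfl | hvu
  · simp
  have hline : HasLowerLipBoundOn (g ∘ lineMap v u) (Icc (0 : ℝ) 1) (k * nndist v u) :=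
    h.comp (lipschitzWith_lineMap v u).lipschitzOnWith (pos_iff_ne_zero.2 (mt nndist_eq_zero.1 hvu))
      fun t ht => hV.lineMap_mem hv hu ht
  simpa [dist_comm] using hline.dist_le_of_mem_Icc (right_mem_Icc.2 zero_le_one)

end HasLowerLipBoundOn

end Oscillation

section LipschitzConstants

variable {X Y : Type*} [PseudoMetricSpace X] [PseudoMetricSpace Y]

/-- `lowerLip D f`, `upperLip D f` and `localLip D f` are the paper's `lip f`, `Lip f` and
`𝕃ip f` for `f` restricted to `D`; `upperBaire D g` is `g^∨` on `D`. -/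
noncomputable def lowerLip (D : Set X) (f : X → Y) (u : X) : ℝ≥0∞ :=
  liminf (fun r : ℝ => ⨆ w ∈ D ∩ ball u r, edist (f w) (f u) / ENNReal.ofReal r) (𝓝[>] 0)

noncomputable def upperLip (D : Set X) (f : X → Y) (u : X) : ℝ≥0∞ :=
  limsup (fun w => edist (f w) (f u) / edist w u) (𝓝[D \ {u}] u)

noncomputable def localLip (D : Set X) (f : X → Y) (x : X) : ℝ≥0∞ :=
  ⨅ r ∈ Ioi (0 : ℝ), ⨆ u ∈ D ∩ ball x r, ⨆ v ∈ D ∩ ball x r, edist (f u) (f v) / edist u v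

noncomputable def upperBaire (D : Set X) (g : X → ℝ≥0∞) (x : X) : ℝ≥0∞ :=
  ⨅ U ∈ 𝓝[D] x, ⨆ u ∈ U ∩ D, g u

theorem upperBaire_mono {D : Set X} {g h : X → ℝ≥0∞} (hgh : ∀ u, g u ≤ h u) (x : X) :
    upperBaire D g x ≤ upperBaire D h x :=
  iInf₂_mono fun _ _ => iSup₂_mono fun u _ => hgh u

theorem lowerLip_le_upperLip (D : Set X) (f : X → Y) (u : X) :
    lowerLip D f u ≤ upperLip D f u := by
  refine le_of_forall_gt_imp_ge_of_dense fun c hc => ?_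
  obtain ⟨δ, hδ, hquot⟩ := Metric.mem_nhdsWithin_iff.mp (eventually_lt_of_limsup_lt hc)
  refine liminf_le_of_frequently_le' (Eventually.frequently ?_)
  filter_upwards [Ioo_mem_nhdsGT hδ] with r hr
  refine iSup₂_le fun w ⟨hwD, hwr⟩ => ?_
  rcases eq_or_ne w u with rfl | hwu
  · simp
  calc edist (f w) (f u) / ENNReal.ofReal r ≤ edist (f w) (f u) / edist w u := by
        gcongr; exact (edist_lt_ofReal.2 hwr).le
    _ ≤ c := (hquot ⟨ball_subset_ball hr.2.le hwr, hwD, hwu⟩).le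

theorem upperBaire_upperLip_le_localLip (D : Set X) (f : X → Y) (x : X) :
    upperBaire D (upperLip D f) x ≤ localLip D f x := by
  refine le_iInf₂ fun r hr =>
    iInf₂_le_of_le (ball x r) (mem_nhdsWithin_of_mem_nhds (ball_mem_nhds x hr)) ?_
  refine iSup₂_le fun u ⟨hux, huD⟩ => limsup_le_of_le (by isBoundedDefault) ?_
  filter_upwards [self_mem_nhdsWithin, mem_nhdsWithin_of_mem_nhds (isOpen_ball.mem_nhds hux)]
    with w hw hwx
  exact le_iSup₂_of_le w ⟨hw.1, hwx⟩ (le_iSup₂_of_le u ⟨huD, hux⟩ le_rfl)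

theorem hasLowerLipBoundOn_of_lowerLip_lt {D V : Set X} {f : X → Y} {k : ℝ≥0} (hVD : V ⊆ D)
    (h : ∀ w ∈ V, lowerLip D f w < k) : HasLowerLipBoundOn f V k := by
  intro w hw δ hδ
  obtain ⟨r, hr, hrδ⟩ := ((frequently_lt_of_liminf_lt (by isBoundedDefault) (h w hw)).and_eventually
    (Ioo_mem_nhdsGT hδ)).exists
  refine ⟨r, hrδ, fun w' hw' hw'w => ?_⟩
  have hquot : edist (f w') (f w) / ENNReal.ofReal r < k :=
    (le_iSup₂_of_le w' ⟨hVD hw', hw'w⟩ le_rfl).trans_lt hr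
  rw [ENNReal.div_lt_iff (Or.inl (by simpa using hrδ.1)) (Or.inl ofReal_ne_top),
    ← ENNReal.ofReal_coe_nnreal, ← ENNReal.ofReal_mul k.coe_nonneg, edist_lt_ofReal] at hquot
  exact hquot.le

theorem localLip_le_upperBaire_lowerLip {E : Type*} [NormedAddCommGroup E] [NormedSpace ℝ E]
    {D : Set E} {x : E}
    (hD : ∀ U ∈ 𝓝[D] x, ∃ V ∈ 𝓝[D] x, Convex ℝ V ∧ V ⊆ U ∧ V ⊆ D) (f : E → Y) :
    localLip D f x ≤ upperBaire D (lowerLip D f) x := by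
  refine le_iInf₂ fun U hU => ?_
  obtain ⟨V, hV, hVconv, hVU, hVD⟩ := hD U hU
  obtain ⟨r, hr, hrV⟩ := Metric.mem_nhdsWithin_iff.mp hV
  refine iInf₂_le_of_le r hr (le_of_forall_gt_imp_ge_of_dense fun c hc => ?_)
  induction c using ENNReal.recTopCoe with
  | top => exact le_top
  | coe c =>
    have hlip : LipschitzOnWith c f V :=
      (hasLowerLipBoundOn_of_lowerLip_lt hVD fun w hw =>
        (le_iSup₂_of_le w ⟨hVU hw, hVD hw⟩ le_rfl).trans_lt hc).lipschitzOnWith hVconv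
    refine iSup₂_le fun u hu => iSup₂_le fun v hv => ENNReal.div_le_of_le_mul ?_
    exact hlip.edist_le_mul_of_le (hrV ⟨hu.2, hu.1⟩) (hrV ⟨hv.2, hv.1⟩) le_rfl

end LipschitzConstants

/-- On a locally convex subset D of a normed space, the upper Baire functions of
lip f and Lip f both coincide with 𝕃ip f. -/
theorem upperBaire_lip_eq_ILip {X : Type*} [NormedAddCommGroup X] [NormedSpace ℝ X]
    (D : Set X)
    (hD : ∀ x ∈ D, ∀ U ∈ 𝓝[D] x, ∃ V ∈ 𝓝[D] x, Convex ℝ V ∧ V ⊆ U ∧ V ⊆ D)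
    (f : X → ℝ) :
    ∀ x ∈ D,
      (⨅ U ∈ 𝓝[D] x, ⨆ u ∈ U ∩ D,
          liminf (fun r : ℝ => ⨆ w ∈ D ∩ ball u r,
            edist (f w) (f u) / ENNReal.ofReal r) (𝓝[>] (0:ℝ))) =
        (⨅ r ∈ Set.Ioi (0:ℝ), ⨆ u ∈ D ∩ ball x r, ⨆ v ∈ D ∩ ball x r,
          edist (f u) (f v) / edist u v) ∧
      (⨅ U ∈ 𝓝[D] x, ⨆ u ∈ U ∩ D,
          limsup (fun w => edist (f w) (f u) / edist w u) (𝓝[(D \ {u})] u)) =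
        (⨅ r ∈ Set.Ioi (0:ℝ), ⨆ u ∈ D ∩ ball x r, ⨆ v ∈ D ∩ ball x r,
          edist (f u) (f v) / edist u v) := by
  intro x hx
  have lip_le_Lip : upperBaire D (lowerLip D f) x ≤ upperBaire D (upperLip D f) x :=
    upperBaire_mono (lowerLip_le_upperLip D f) x
  have Lip_le_ILip : upperBaire D (upperLip D f) x ≤ localLip D f x :=
    upperBaire_upperLip_le_localLip D f x
  have ILip_le_lip : localLip D f x ≤ upperBaire D (lowerLip D f) x :=
    localLip_le_upperBaire_lowerLip (hD x hx) f
  exact ⟨le_antisymm (lip_le_Lip.trans Lip_le_ILip) ILip_le_lip,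
    le_antisymm Lip_le_ILip (ILip_le_lip.trans lip_le_Lip)⟩
end
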